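/- arXiv:2212.09084 — 5 statements merged into one kernel-verified Lean document; each statement's English description precedes it below -/
import Mathlib

section
/- Let Y be a square matrix over ℤ satisfying (Y - I)^3 = 0 and Y ≡ I (mod 2). Then for every odd integer m ≥ 1, Y^m ≡ I (mod 2m). -/
/-!
Write `Y = 1 + 2M`. Since `N = 2M` satisfies `N³ = 0`, the binomial theorem truncates to
`Yᵐ = 1 + m N + C(m,2) N²`, and for odd `m = 2t + 1` we have `C(m,2) = m t`, so
`Yᵐ - 1 = 2m (M + 2t M²)`.
-/

theorem one_add_pow_of_pow_three_eq_zero {R : Type*} [Semiring R] {N : R} (hN : N ^ 3 = 0)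
    (k : ℕ) : (1 + N) ^ k = 1 + k • N + k.choose 2 • N ^ 2 := by
  induction k with
  | zero => simp
  | succ k ih =>
    rw [pow_succ, ih, Nat.choose_succ_succ', Nat.choose_one_right]
    simp only [add_mul, mul_add, one_mul, mul_one, smul_mul_assoc, ← pow_two, ← pow_succ, hN,
      smul_zero, add_zero]
    rw [add_smul, add_smul, one_smul]
    abel

theorem exists_one_add_two_nsmul_pow_eq_of_odd {R : Type*} [Semiring R] {M : R}
    (hM : (2 • M) ^ 3 = 0) {m : ℕ} (hm : Odd m) :
    ∃ P : R, (1 + 2 • M) ^ m = 1 + (2 * m) • P := by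
  obtain ⟨t, rfl⟩ := hm
  have hchoose : (2 * t + 1).choose 2 = (2 * t + 1) * t := by
    rw [Nat.choose_two_right, Nat.add_sub_cancel, mul_left_comm, Nat.mul_div_cancel_left _ two_pos]
  refine ⟨M + (2 * t) • M ^ 2, ?_⟩
  rw [one_add_pow_of_pow_three_eq_zero hM, hchoose, smul_pow]
  module

theorem Matrix.exists_eq_smul_of_forall_dvd {ι κ α : Type*} [Semiring α] {k : α}
    {A : Matrix ι κ α} (hA : ∀ i j, k ∣ A i j) : ∃ B : Matrix ι κ α, A = k • B := by
  choose B hB using hA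
  exact ⟨Matrix.of B, Matrix.ext hB⟩

theorem pow_congr_one_mod_two_mul_of_odd_general {n : ℕ} (Y : Matrix (Fin n) (Fin n) ℤ)
    (hcube : (Y - 1) ^ 3 = 0) (hmod2 : ∀ i j, (2 : ℤ) ∣ (Y - 1) i j)
    (m : ℕ) (hodd : Odd m) :
    ∀ i j, ((2 * m : ℕ) : ℤ) ∣ (Y ^ m - 1) i j := by
  obtain ⟨M, hM⟩ := Matrix.exists_eq_smul_of_forall_dvd hmod2
  rw [ofNat_smul_eq_nsmul] at hM
  have hY : Y = 1 + 2 • M := by rw [← hM, add_sub_cancel]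
  obtain ⟨P, hP⟩ := exists_one_add_two_nsmul_pow_eq_of_odd (hM ▸ hcube) hodd
  intro i j
  rw [hY, hP, add_sub_cancel_left, Matrix.smul_apply, nsmul_eq_mul]
  exact dvd_mul_right _ _

/-- Let `Y` be a square integer matrix with `(Y - I)^3 = 0` and `Y ≡ I (mod 2)`
(entrywise). Then for every odd integer `m ≥ 1`, `Y^m ≡ I (mod 2m)` entrywise. -/
theorem pow_congr_one_mod_two_mul_of_odd {n : ℕ} (Y : Matrix (Fin n) (Fin n) ℤ)
    (hcube : (Y - 1) ^ 3 = 0) (hmod2 : ∀ i j, (2 : ℤ) ∣ (Y - 1) i j)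
    (m : ℕ) (hm : 1 ≤ m) (hodd : Odd m) :
    ∀ i j, ((2 * m : ℕ) : ℤ) ∣ (Y ^ m - 1) i j :=
  pow_congr_one_mod_two_mul_of_odd_general Y hcube hmod2 m hodd
end

section
/- For n ≥ 3 and m ≥ 3, the principal congruence subgroup W[m] of a small Coxeter group W of rank n-1 (defined via the integral Tits representation) is torsion free. -/
/-- The entry `α(i,j)` of the integral Tits matrix of a small Coxeter group:
`1` if `m_{i,j} = 3`, `0` if `m_{i,j} = 2`, `2` if `m_{i,j} = ∞` (encoded as `0`),
and `-2` on the diagonal. -/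
def titsAlpha {B : Type*} [DecidableEq B] (M : CoxeterMatrix B) (i j : B) : ℤ :=
  if i = j then -2 else if M.M i j = 3 then 1 else if M.M i j = 2 then 0 else 2

/-- The integral Tits matrix of the generator `w_i` of a small Coxeter group: it agrees
with the identity except in row `i`, where the entries are `α(i,q)` off the diagonal and
`-1 = 1 + α(i,i)` on the diagonal. -/
def titsIntMatrix {B : Type*} [DecidableEq B] (M : CoxeterMatrix B) (i : B) :
    Matrix B B ℤ :=
  fun p q => (if p = q then 1 else 0) + (if p = i then titsAlpha M i q else 0)

open Finset
set_option linter.unusedSectionVars false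

section aux
variable {B : Type*} [Fintype B] [DecidableEq B]

lemma entry_dvd_mul {c d : ℤ} {M N : Matrix B B ℤ} (hM : ∀ i j, c ∣ M i j)
    (hN : ∀ i j, d ∣ N i j) : ∀ i j, c * d ∣ (M * N) i j := fun i j => by
  rw [Matrix.mul_apply]
  exact Finset.dvd_sum fun l _ => mul_dvd_mul (hM i l) (hN l j)

lemma entry_dvd_pow {c : ℤ} {N : Matrix B B ℤ} (h : ∀ i j, c ∣ N i j) :
    ∀ k i j, c ^ (k + 1) ∣ (N ^ (k + 1)) i j := by
  intro k
  induction k with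
  | zero => simpa using h
  | succ t ih =>
    intro i j
    have h2 := entry_dvd_mul ih h i j
    rw [← pow_succ, ← pow_succ] at h2
    exact h2

/-- congruence is preserved by powers -/
lemma entry_dvd_pow_sub_one {m : ℤ} {A : Matrix B B ℤ} (h : ∀ i j, m ∣ (A - 1) i j) :
    ∀ (k : ℕ) (i j : B), m ∣ (A ^ k - 1) i j := by
  intro k
  induction k with
  | zero => simp
  | succ t ih =>
    intro i j
    have key : A ^ (t + 1) - 1 = A ^ t * (A - 1) + (A ^ t - 1) := by
      rw [pow_succ]; noncomm_ring
    rw [key, Matrix.add_apply]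
    refine dvd_add ?_ (ih i j)
    rw [Matrix.mul_apply]
    exact Finset.dvd_sum fun l _ => (h l j).mul_left _

/-- the key binomial identity -/
lemma key_identity (p : ℕ) (hp : p.Prime) (N : Matrix B B ℤ) (h : (1 + N) ^ p = 1) :
    p • N = -∑ r ∈ Ico 2 (p + 1), p.choose r • N ^ r := by
  have hsum : ∑ r ∈ range (p + 1), p.choose r • N ^ r = 1 := by
    have hc := (Commute.one_right N).add_pow p
    rw [add_comm] at h
    rw [h] at hc
    rw [hc]
    refine Finset.sum_congr rfl fun r _ => ?_
    rw [one_pow, mul_one, nsmul_eq_mul, (Nat.cast_commute (p.choose r) (N ^ r)).eq]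
  have hsplit : ∑ r ∈ Ico 0 2, p.choose r • N ^ r + ∑ r ∈ Ico 2 (p + 1), p.choose r • N ^ r
      = ∑ r ∈ Ico 0 (p + 1), p.choose r • N ^ r :=
    Finset.sum_Ico_consecutive _ (by omega) (by have := hp.two_le; omega)
  rw [← Finset.range_eq_Ico] at hsplit
  have h02 : ∑ r ∈ range 2, p.choose r • N ^ r = 1 + p • N := by
    simp [Finset.sum_range_succ]
  rw [h02, ← Finset.range_eq_Ico, hsum, add_assoc] at hsplit
  have hz : p • N + ∑ r ∈ Ico 2 (p + 1), p.choose r • N ^ r = 0 := by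
    have h1 : (1 : Matrix B B ℤ) + (p • N + ∑ r ∈ Ico 2 (p + 1), p.choose r • N ^ r)
        = 1 + 0 := by rw [hsplit, add_zero]
    exact add_left_cancel h1
  exact eq_neg_of_add_eq_zero_left hz

/-- one step of the congruence bootstrapping -/
lemma step_lemma (p : ℕ) (hp : p.Prime) (N : Matrix B B ℤ)
    (hid : p • N = -∑ r ∈ Ico 2 (p + 1), p.choose r • N ^ r)
    (q : ℕ) (hq : q.Prime) (k : ℕ) (hk1 : 1 ≤ k)
    (hk2 : q = p → k + 2 ≤ k * p)
    (hd : ∀ i j, (q : ℤ) ^ k ∣ N i j) : ∀ i j, (q : ℤ) ^ (k + 1) ∣ N i j := by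
  intro i j
  -- entrywise identity
  have hentry : (p : ℤ) * N i j
      = -∑ r ∈ Ico 2 (p + 1), (p.choose r : ℤ) * (N ^ r) i j := by
    have h' := congrFun (congrFun hid i) j
    have lhs : (p • N) i j = (p : ℤ) * N i j := by
      simp [Matrix.smul_apply, nsmul_eq_mul]
    have rhs : (-∑ r ∈ Ico 2 (p + 1), p.choose r • N ^ r) i j
        = -∑ r ∈ Ico 2 (p + 1), (p.choose r : ℤ) * (N ^ r) i j := by
      simp only [Matrix.neg_apply, Matrix.sum_apply, Matrix.smul_apply]
      simp [nsmul_eq_mul]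
    rw [← lhs, ← rhs]; exact h'
  -- divisibility of N^r entries
  have hNr : ∀ r ∈ Ico 2 (p + 1), (q : ℤ) ^ (k * r) ∣ (N ^ r) i j := by
    intro r hr
    simp only [Finset.mem_Ico] at hr
    obtain ⟨hr2, _⟩ := hr
    have : ((q : ℤ) ^ k) ^ ((r - 1) + 1) ∣ (N ^ ((r - 1) + 1)) i j :=
      entry_dvd_pow hd (r - 1) i j
    rw [show r - 1 + 1 = r by omega] at this
    rwa [← pow_mul] at this
  by_cases hqp : q = p
  · subst hqp
    -- show q^(k+2) divides RHS
    have hR : (q : ℤ) ^ (k + 2) ∣ ∑ r ∈ Ico 2 (q + 1), (q.choose r : ℤ) * (N ^ r) i j := by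
      refine Finset.dvd_sum fun r hr => ?_
      have hm := Finset.mem_Ico.mp hr
      rcases eq_or_ne r q with rfl | hrq
      · -- r = q : q^(k*q) divides the entry, k*q ≥ k+2
        have h1 := hNr r (by simp [Finset.mem_Ico]; omega)
        exact Dvd.dvd.mul_left (dvd_trans (pow_dvd_pow _ (hk2 rfl)) h1) _
      · -- r < q : q ∣ choose, q^(k*r) divides entry, 1 + k*r ≥ k+2
        have hrlt : r < q := by omega
        have hch : (q : ℤ) ∣ (q.choose r : ℤ) := by
          exact_mod_cast Int.natCast_dvd_natCast.mpr
            (hq.dvd_choose_self (by omega) hrlt)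
        have h1 := hNr r hr
        have h2 : (q : ℤ) ^ (k + 1) ∣ (N ^ r) i j :=
          dvd_trans (pow_dvd_pow _ (by nlinarith)) h1
        calc (q : ℤ) ^ (k + 2) = (q : ℤ) * (q : ℤ) ^ (k + 1) := by ring
          _ ∣ (q.choose r : ℤ) * (N ^ r) i j := mul_dvd_mul hch h2
    have hR2 : (q : ℤ) ^ (k + 2) ∣ (q : ℤ) * N i j := by
      rw [hentry, dvd_neg]; exact hR
    have hqz : (q : ℤ) ≠ 0 := by exact_mod_cast hq.ne_zero
    rw [show (q : ℤ) ^ (k + 2) = (q : ℤ) * (q : ℤ) ^ (k + 1) by ring] at hR2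
    exact (mul_dvd_mul_iff_left hqz).mp hR2
  · -- q ≠ p : q^(2k) divides RHS, coprime to p
    have hR : (q : ℤ) ^ (2 * k) ∣ ∑ r ∈ Ico 2 (p + 1), (p.choose r : ℤ) * (N ^ r) i j := by
      refine Finset.dvd_sum fun r hr => ?_
      have hm := Finset.mem_Ico.mp hr
      have h1 := hNr r hr
      exact Dvd.dvd.mul_left (dvd_trans (pow_dvd_pow _ (by nlinarith)) h1) _
    rw [← dvd_neg, ← hentry] at hR
    have hcop : IsCoprime ((q : ℤ) ^ (k + 1)) (p : ℤ) := by
      have : Nat.Coprime (q ^ (k + 1)) p :=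
        Nat.Coprime.pow_left _ ((Nat.coprime_primes hq hp).mpr hqp)
      exact_mod_cast Nat.isCoprime_iff_coprime.mpr this
    have hq1 : (q : ℤ) ^ (k + 1) ∣ (p : ℤ) * N i j :=
      dvd_trans (pow_dvd_pow _ (by omega)) hR
    exact hcop.dvd_of_dvd_mul_left hq1

/-- Minkowski: a prime-order integer matrix ≡ 1 mod m (m ≥ 3) is trivial. -/
lemma prime_case (m : ℕ) (hm : 3 ≤ m) (p : ℕ) (hp : p.Prime)
    (N : Matrix B B ℤ) (hN : ∀ i j, (m : ℤ) ∣ N i j) (h : (1 + N) ^ p = 1) :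
    N = 0 := by
  have hid := key_identity p hp N h
  obtain ⟨q, hq, k0, hk01, hk02, hd0⟩ :
      ∃ q : ℕ, q.Prime ∧ ∃ k0 : ℕ, 1 ≤ k0 ∧ (q = p → k0 + 2 ≤ k0 * p) ∧
        ∀ i j, (q : ℤ) ^ k0 ∣ N i j := by
    by_cases hall : ∀ r : ℕ, r.Prime → r ∣ m → r = p
    · have hpm : p ∣ m := by
        have h1 := Nat.minFac_prime (show m ≠ 1 by omega)
        have h2 := Nat.minFac_dvd m
        rwa [hall _ h1 h2] at h2
      rcases eq_or_ne p 2 with rfl | hp2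
      · have h4 : 4 ∣ m := by
          obtain ⟨d, hdm⟩ := hpm
          have hd1 : d ≠ 1 := by omega
          have hdf := Nat.minFac_prime hd1
          have hdvm : d.minFac ∣ m := hdm ▸ (Nat.minFac_dvd d).mul_left 2
          have h2d : 2 ∣ d := (hall _ hdf hdvm) ▸ Nat.minFac_dvd d
          obtain ⟨e, he⟩ := h2d
          exact ⟨e, by omega⟩
        refine ⟨2, Nat.prime_two, 2, by omega, fun _ => by norm_num, fun i j => ?_⟩
        have h4' : ((4 : ℕ) : ℤ) ∣ N i j :=
          dvd_trans (Int.natCast_dvd_natCast.mpr h4) (hN i j)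
        have : ((2 : ℕ) : ℤ) ^ 2 = ((4 : ℕ) : ℤ) := by norm_num
        rw [this]; exact h4'
      · refine ⟨p, hp, 1, le_refl _,
          fun _ => by have := hp.two_le; omega, fun i j => ?_⟩
        rw [pow_one]
        exact dvd_trans (Int.natCast_dvd_natCast.mpr hpm) (hN i j)
    · push_neg at hall
      obtain ⟨r, hr, hrm, hrp⟩ := hall
      refine ⟨r, hr, 1, le_refl _, fun hh => absurd hh hrp, fun i j => ?_⟩
      rw [pow_one]
      exact dvd_trans (Int.natCast_dvd_natCast.mpr hrm) (hN i j)
  have hboot : ∀ t (i j : B), (q : ℤ) ^ (k0 + t) ∣ N i j := by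
    intro t
    induction t with
    | zero => simpa using hd0
    | succ s ih =>
      have hcond : q = p → (k0 + s) + 2 ≤ (k0 + s) * p := by
        intro hqp
        have h1 := hk02 hqp
        have hp2 := hp.two_le
        nlinarith
      intro i j
      have h2 := step_lemma p hp N hid q hq (k0 + s) (by omega) hcond ih i j
      rwa [show k0 + s + 1 = k0 + (s + 1) by omega] at h2
  ext i j
  simp only [Matrix.zero_apply]
  by_contra hx0
  have hq2 : 2 ≤ q := hq.two_le
  have hdvd : ∀ t : ℕ, (q : ℤ) ^ t ∣ N i j := fun t =>
    dvd_trans (pow_dvd_pow _ (Nat.le_add_left t k0)) (hboot t i j)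
  have hle := Int.le_of_dvd (abs_pos.mpr hx0) ((dvd_abs _ _).mpr (hdvd (N i j).natAbs))
  have h2 : ((N i j).natAbs : ℤ) < 2 ^ (N i j).natAbs := by
    exact_mod_cast Nat.lt_two_pow_self (n := (N i j).natAbs)
  have h3 : (2 : ℤ) ^ (N i j).natAbs ≤ (q : ℤ) ^ (N i j).natAbs :=
    pow_le_pow_left₀ (by norm_num) (by exact_mod_cast hq2) _
  rw [Int.abs_eq_natAbs] at hle
  linarith

/-- Minkowski: a finite-order integer matrix ≡ 1 mod m (m ≥ 3) is the identity. -/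
lemma finite_order_case (m : ℕ) (hm : 3 ≤ m) :
    ∀ n : ℕ, 0 < n → ∀ A : Matrix B B ℤ,
      (∀ i j, (m : ℤ) ∣ (A - 1) i j) → A ^ n = 1 → A = 1 := by
  intro n
  induction n using Nat.strong_induction_on with
  | _ n ih =>
    intro hn A hA hpow
    rcases eq_or_ne n 1 with rfl | hne
    · simpa using hpow
    · set q := n.minFac with hqdef
      have hq : q.Prime := Nat.minFac_prime hne
      have hdvd : q ∣ n := Nat.minFac_dvd n
      have hA' : ∀ i j, (m : ℤ) ∣ (A ^ (n / q) - 1) i j := fun i j =>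
        entry_dvd_pow_sub_one hA (n / q) i j
      have hBq : (A ^ (n / q)) ^ q = 1 := by
        rw [← pow_mul, Nat.div_mul_cancel hdvd]; exact hpow
      have hB1 : A ^ (n / q) = 1 := by
        have hz := prime_case m hm q hq (A ^ (n / q) - 1)
          (fun i j => hA' i j) (by rw [add_sub_cancel]; exact hBq)
        have := sub_eq_zero.mp hz
        exact this
      have hlt : n / q < n := Nat.div_lt_self hn hq.one_lt
      have hpos : 0 < n / q := Nat.div_pos (Nat.minFac_le hn) hq.pos
      exact ih (n / q) hlt hpos A hA hB1

end aux

/-- For a small Coxeter group `W` (all exponents in `{1,2,3,∞}`) with faithful integral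
Tits representation `ρ : W → GL(n-1, ℤ)` and `m ≥ 3`, the principal congruence subgroup
`W[m] = ker(W → GL(n-1, ℤ/m))` is torsion free. -/
theorem small_coxeter_congruence_torsion_free {B W : Type*} [DecidableEq B] [Fintype B]
    [Group W] {M : CoxeterMatrix B} (cs : CoxeterSystem M W)
    (hsmall : ∀ i j, M.M i j = 0 ∨ M.M i j ≤ 3)
    (ρ : W →* Matrix.GeneralLinearGroup B ℤ) (hinj : Function.Injective ρ)
    (hρ : ∀ i : B, (ρ (cs.simple i) : Matrix B B ℤ) = titsIntMatrix M i)
    (m : ℕ) (hm : 3 ≤ m) (w : W)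
    (hw : ∀ p q, (m : ℤ) ∣ (((ρ w : Matrix B B ℤ)) - 1) p q)
    (hfin : IsOfFinOrder w) : w = 1 := by
  obtain ⟨n, hn, hwn⟩ := isOfFinOrder_iff_pow_eq_one.mp hfin
  have hpow : ((ρ w : Matrix B B ℤ)) ^ n = 1 := by
    have h1 : (ρ w) ^ n = 1 := by rw [← map_pow, hwn, map_one]
    calc ((ρ w : Matrix B B ℤ)) ^ n
        = (((ρ w) ^ n : Matrix.GeneralLinearGroup B ℤ) : Matrix B B ℤ) :=
          (Units.val_pow_eq_pow_val _ n).symm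
      _ = 1 := by rw [h1]; rfl
  have hA1 : ((ρ w : Matrix B B ℤ)) = 1 :=
    finite_order_case m hm n hn _ hw hpow
  have hρw : ρ w = 1 := Units.ext hA1
  apply hinj
  rw [hρw, map_one]
end

section
/- For m ≥ 3, the principal congruence subgroup of SL(n, ℤ) of level m (the kernel of reduction mod m) is torsion free. -/
/-!
Minkowski's argument. Some prime power `q ^ c ≥ 3` divides `m`, and a torsion element `A ≠ 1` has a
power `B ≠ 1` of prime order `p` with `B = 1 + q ^ c • Z`. In the binomial expansion of
`(1 + q ^ k • Z) ^ p = 1`, every term of degree `≥ 2` in `Z` has a coefficient divisible by a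
strictly higher power of `q` than the coefficient `p q ^ k` of the linear term (when `p = q` this
uses `q ∣ (q choose j)` for `0 < j < q`, and `q ^ k ≥ 3` for the last term), so `q ∣ Z`.
Iterating, every entry of `Z` is divisible by every power of `q`, hence `Z = 0`.
-/

open Finset

theorem Nat.exists_prime_pow_dvd_of_three_le {m : ℕ} (hm : 3 ≤ m) :
    ∃ q c : ℕ, q.Prime ∧ 3 ≤ q ^ c ∧ q ^ c ∣ m := by
  obtain ⟨a, o, ho, rfl⟩ := Nat.exists_eq_two_pow_mul_odd (n := m) (by omega)
  by_cases ho1 : o = 1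
  · subst ho1
    exact ⟨2, a, Nat.prime_two, by simpa using hm, by simp⟩
  · have hq := Nat.minFac_prime ho1
    have hq2 : o.minFac ≠ 2 := fun h2 =>
      (Nat.not_even_iff_odd.2 ho) (even_iff_two_dvd.2 (h2 ▸ o.minFac_dvd))
    refine ⟨o.minFac, 1, hq, ?_, by rw [pow_one]; exact Dvd.dvd.mul_left o.minFac_dvd _⟩
    have := hq.two_le
    rw [pow_one]
    omega

theorem Nat.add_two_le_mul_of_three_le_pow {q k : ℕ} (hq : 2 ≤ q) (h : 3 ≤ q ^ k) :
    k + 2 ≤ k * q := by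
  rcases k with _ | _ | k
  · simp at h
  · simpa using h
  · nlinarith

theorem Nat.Prime.pow_add_two_dvd_choose_mul_pow {q k j : ℕ} (hq : q.Prime) (hqk : 3 ≤ q ^ k)
    (hj : 2 ≤ j) (hjq : j ≤ q) : q ^ (k + 2) ∣ q.choose j * q ^ (k * j) := by
  have hk := Nat.add_two_le_mul_of_three_le_pow hq.two_le hqk
  rcases hjq.lt_or_eq with hjq | hjq
  · rw [pow_succ']
    exact mul_dvd_mul (hq.dvd_choose_self (by omega) hjq) (pow_dvd_pow q (by nlinarith))
  · rw [hjq]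
    exact Dvd.dvd.mul_left (pow_dvd_pow q hk) _

theorem Finset.exists_sum_nsmul_eq_nsmul {ι M : Type*} [AddCommMonoid M] {s : Finset ι}
    {c : ι → ℕ} {d : ℕ} (h : ∀ i ∈ s, d ∣ c i) (f : ι → M) :
    ∃ w, ∑ i ∈ s, c i • f i = d • w :=
  ⟨∑ i ∈ s, (c i / d) • f i, by
    rw [smul_sum]
    exact sum_congr rfl fun i hi => by rw [smul_smul, Nat.mul_div_cancel' (h i hi)]⟩

theorem Nat.Coprime.exists_eq_nsmul_of_nsmul_eq_nsmul {M : Type*} [AddCommGroup M] {p q : ℕ}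
    (hpq : p.Coprime q) {z w : M} (h : p • z = q • w) : ∃ v, z = q • v := by
  obtain ⟨a, b, hab⟩ := Nat.isCoprime_iff_coprime.2 hpq
  refine ⟨a • w + b • z, ?_⟩
  have h' : (p : ℤ) • z = (q : ℤ) • w := by simpa only [natCast_zsmul] using h
  rw [← natCast_zsmul]
  linear_combination (norm := module) a • h' - hab • z

section Ring

variable {R : Type*} [Ring R]

theorem exists_pow_eq_one_add_nsmul {d : ℕ} {a x : R} (h : a = 1 + d • x) (s : ℕ) :
    ∃ y, a ^ s = 1 + d • y := by
  have hx : d • x = a - 1 := by rw [h, add_sub_cancel_left]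
  exact ⟨(∑ i ∈ range s, a ^ i) * x, by rw [← mul_smul_comm, hx, geom_sum_mul, add_sub_cancel]⟩

theorem one_add_nsmul_pow (d : ℕ) (z : R) (p : ℕ) :
    (1 + d • z) ^ p = ∑ j ∈ range (p + 1), (p.choose j * d ^ j) • z ^ j := by
  rw [add_comm, (Commute.one_right _).add_pow]
  refine sum_congr rfl fun j _ => ?_
  rw [one_pow, mul_one, smul_pow, ← nsmul_eq_mul', smul_smul, mul_comm]

theorem nsmul_add_sum_eq_zero_of_one_add_nsmul_pow_eq_one {d p : ℕ} (hp : 1 ≤ p) {z : R}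
    (h : (1 + d • z) ^ p = 1) :
    (p * d) • z + ∑ j ∈ Ico 2 (p + 1), (p.choose j * d ^ j) • z ^ j = 0 := by
  rw [one_add_nsmul_pow, range_eq_Ico, sum_eq_sum_Ico_succ_bot (by omega),
    sum_eq_sum_Ico_succ_bot (by omega)] at h
  simpa only [zero_add, Nat.reduceAdd, Nat.choose_zero_right, Nat.choose_one_right, pow_zero,
    pow_one, mul_one, one_smul, add_assoc, add_eq_left] using h

variable [IsAddTorsionFree R]

theorem exists_eq_nsmul_of_one_add_pow_nsmul_pow_eq_one {p q k : ℕ} (hp : p.Prime)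
    (hq : q.Prime) (hqk : 3 ≤ q ^ k) {z : R} (h : (1 + q ^ k • z) ^ p = 1) :
    ∃ w, z = q • w := by
  have hsum := nsmul_add_sum_eq_zero_of_one_add_nsmul_pow_eq_one hp.one_lt.le h
  simp only [← pow_mul] at hsum
  by_cases hpq : p = q
  · subst hpq
    have hdvd : ∀ j ∈ Ico 2 (p + 1), p ^ (k + 2) ∣ p.choose j * p ^ (k * j) := fun j hj =>
      hp.pow_add_two_dvd_choose_mul_pow hqk (mem_Ico.1 hj).1 (Nat.lt_succ_iff.1 (mem_Ico.1 hj).2)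
    obtain ⟨w, hw⟩ := exists_sum_nsmul_eq_nsmul hdvd (z ^ ·)
    refine ⟨-w, nsmul_right_injective (pow_ne_zero (k + 1) hp.ne_zero) ?_⟩
    rw [hw, ← pow_succ'] at hsum
    simpa only [smul_neg, smul_smul, ← pow_succ] using eq_neg_of_add_eq_zero_left hsum
  · have hk : 1 ≤ k := Nat.pos_of_ne_zero (by rintro rfl; simp at hqk)
    have hdvd : ∀ j ∈ Ico 2 (p + 1), q ^ (k + 1) ∣ p.choose j * q ^ (k * j) := fun j hj =>
      Dvd.dvd.mul_left (pow_dvd_pow q (by nlinarith [(mem_Ico.1 hj).1])) _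
    obtain ⟨w, hw⟩ := exists_sum_nsmul_eq_nsmul hdvd (z ^ ·)
    refine ((Nat.coprime_primes hp hq).2 hpq).exists_eq_nsmul_of_nsmul_eq_nsmul (w := -w) ?_
    refine nsmul_right_injective (pow_ne_zero k hq.ne_zero) ?_
    rw [hw, mul_comm, mul_smul, pow_succ, mul_smul] at hsum
    simpa only [smul_neg] using eq_neg_of_add_eq_zero_left hsum

theorem exists_eq_pow_nsmul_of_one_add_pow_nsmul_pow_eq_one {p q k : ℕ} (hp : p.Prime)
    (hq : q.Prime) (hqk : 3 ≤ q ^ k) {z : R} (h : (1 + q ^ k • z) ^ p = 1) (t : ℕ) :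
    ∃ w, z = q ^ t • w := by
  induction t with
  | zero => exact ⟨z, (one_smul ℕ z).symm⟩
  | succ t ih =>
    obtain ⟨w, rfl⟩ := ih
    have hqkt : 3 ≤ q ^ (k + t) := hqk.trans (Nat.pow_le_pow_right hq.pos (by omega))
    have hw : (1 + q ^ (k + t) • w) ^ p = 1 := by rwa [pow_add, mul_smul]
    obtain ⟨v, rfl⟩ := exists_eq_nsmul_of_one_add_pow_nsmul_pow_eq_one hp hq hqkt hw
    exact ⟨v, by rw [smul_smul, ← pow_succ]⟩

end Ring

namespace Matrix

variable {ι κ : Type*}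

instance instIsAddTorsionFree {α : Type*} [AddMonoid α] [IsAddTorsionFree α] :
    IsAddTorsionFree (Matrix ι κ α) :=
  Pi.instIsAddTorsionFree

theorem exists_eq_nsmul_of_forall_dvd {d : ℕ} {M : Matrix ι κ ℤ} (h : ∀ i j, (d : ℤ) ∣ M i j) :
    ∃ X, M = d • X :=
  ⟨of fun i j => M i j / d, by ext i j; simp [Int.mul_ediv_cancel' (h i j)]⟩

theorem eq_zero_of_forall_exists_eq_pow_nsmul {q : ℕ} (hq : 2 ≤ q) {Z : Matrix ι κ ℤ}
    (h : ∀ t, ∃ W, Z = q ^ t • W) : Z = 0 := by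
  ext i j
  by_contra hne
  obtain ⟨t, ht⟩ := (Int.finiteMultiplicity_iff (a := q)).2 ⟨by rw [Int.natAbs_natCast]; omega, hne⟩
  obtain ⟨W, hW⟩ := h (t + 1)
  exact ht ⟨W i j, by simp [hW]⟩

theorem eq_one_of_isOfFinOrder_of_forall_dvd [Fintype ι] [DecidableEq ι] {m : ℕ} (hm : 3 ≤ m)
    {A : Matrix ι ι ℤ} (hA : ∀ i j, (m : ℤ) ∣ (A - 1) i j) (hfin : IsOfFinOrder A) : A = 1 := by
  by_contra hA1
  obtain ⟨p, hp, hpA⟩ := Nat.exists_prime_and_dvd (mt orderOf_eq_one_iff.1 hA1)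
  set B := A ^ (orderOf A / p)
  have hB : orderOf B = p := orderOf_pow_orderOf_div hfin.orderOf_pos.ne' hpA
  obtain ⟨q, c, hq, hqc, r, hqcr⟩ := Nat.exists_prime_pow_dvd_of_three_le hm
  obtain ⟨X, hX⟩ := exists_eq_nsmul_of_forall_dvd hA
  obtain ⟨Z, hZ⟩ : ∃ Z, B = 1 + q ^ c • Z := by
    obtain ⟨Y, hY⟩ := exists_pow_eq_one_add_nsmul (eq_add_of_sub_eq' hX) (orderOf A / p)
    exact ⟨r • Y, by rwa [← mul_smul, ← hqcr]⟩
  have hBp : (1 + q ^ c • Z) ^ p = 1 := by rw [← hZ, ← hB, pow_orderOf_eq_one]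
  have hZ0 : Z = 0 := eq_zero_of_forall_exists_eq_pow_nsmul hq.two_le
    (exists_eq_pow_nsmul_of_one_add_pow_nsmul_pow_eq_one hp hq hqc hBp)
  exact hp.ne_one (by rw [← hB, orderOf_eq_one_iff, hZ, hZ0, smul_zero, add_zero])

end Matrix

/-- For `m ≥ 3`, the principal congruence subgroup of `SL(n, ℤ)` of level `m`
(the kernel of reduction mod `m`) is torsion free: any element of finite order which is
congruent to the identity modulo `m` is the identity. -/
theorem SL_congruence_subgroup_torsion_free (n m : ℕ) (hm : 3 ≤ m)
    (A : Matrix.SpecialLinearGroup (Fin n) ℤ)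
    (hA : ∀ i j, (m : ℤ) ∣ ((A : Matrix (Fin n) (Fin n) ℤ) - 1) i j)
    (hfin : IsOfFinOrder A) : A = 1 :=
  Subtype.ext <| Matrix.eq_one_of_isOfFinOrder_of_forall_dvd hm hA
    (Matrix.SpecialLinearGroup.coeMonoidHom.isOfFinOrder hfin)
end

section
/- Let W be a right-angled Coxeter group with integral Tits representation ρ. Then the level-4 principal congruence subgroup W[4] equals the commutator subgroup W' of W. -/
/-- The integral Tits matrix of the generator `w_k` of a right-angled Coxeter group: it
agrees with the identity except in row `k`, where the diagonal entry is `-1` and the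
off-diagonal entries are `0` (if `m_{k,q} = 2`) or `2` (if `m_{k,q} = ∞`, encoded `0`). -/
def racgTitsMatrix {B : Type*} [DecidableEq B] (M : CoxeterMatrix B) (k : B) :
    Matrix B B ℤ :=
  fun p q =>
    if p ≠ k then (if p = q then 1 else 0)
    else if q = k then -1
    else if M.M k q = 2 then 0 else 2

/-- Let `W` be a right-angled Coxeter group with faithful integral Tits representation
`ρ`.  Then the level-4 principal congruence subgroup `W[4]` equals the commutator
subgroup `W'` of `W`. -/
theorem racg_congruence_four_eq_commutator {B W : Type*} [DecidableEq B] [Fintype B]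
    [Group W] {M : CoxeterMatrix B} (cs : CoxeterSystem M W)
    (hra : ∀ i j, i ≠ j → M.M i j = 2 ∨ M.M i j = 0)
    (ρ : W →* Matrix.GeneralLinearGroup B ℤ) (hinj : Function.Injective ρ)
    (hρ : ∀ i : B, (ρ (cs.simple i) : Matrix B B ℤ) = racgTitsMatrix M i) :
    ∀ w : W, (∀ p q, (4 : ℤ) ∣ (((ρ w : Matrix B B ℤ)) - 1) p q) ↔ w ∈ commutator W := by
  classical
  -- the mod-4 reduction of the representation, as a monoid hom into matrices
  let π : Matrix.GeneralLinearGroup B ℤ →* Matrix B B (ZMod 4) :=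
    ((Int.castRingHom (ZMod 4)).mapMatrix.toMonoidHom).comp (Units.coeHom (Matrix B B ℤ))
  let φ : W →* Matrix B B (ZMod 4) := π.comp ρ
  have hφapp : ∀ u : W, φ u = ((ρ u : Matrix B B ℤ)).map (Int.castRingHom (ZMod 4)) :=
    fun u => rfl
  -- the "nilpotent part" of the image of a simple reflection
  let F : B → Matrix B B (ZMod 4) := fun i p q =>
    if p = i then (if q = i then 1 else if M.M i q = 2 then 0 else 1) else 0
  have hF : ∀ i, (racgTitsMatrix M i).map (Int.castRingHom (ZMod 4))
      = 1 + (2 : ZMod 4) • F i := by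
    intro i
    ext p q
    rw [Matrix.add_apply, Matrix.smul_apply]
    simp only [Matrix.map_apply, racgTitsMatrix, Matrix.add_apply, Matrix.smul_apply,
      Matrix.one_apply, F, smul_eq_mul, ne_eq, ite_not]
    split_ifs <;> simp_all <;> decide
  have hφs : ∀ i, φ (cs.simple i) = 1 + (2 : ZMod 4) • F i := by
    intro i
    rw [hφapp, hρ i, hF i]
  -- multiplication rule for matrices of the form `1 + 2 • S`
  have hmul : ∀ S T : Matrix B B (ZMod 4),
      (1 + (2 : ZMod 4) • S) * (1 + (2 : ZMod 4) • T) = 1 + (2 : ZMod 4) • (S + T) := by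
    intro S T
    have h0 : ((2 : ZMod 4) • S) * ((2 : ZMod 4) • T) = 0 := by
      have h22 : (2 : ZMod 4) * 2 = 0 := by decide
      rw [Matrix.smul_mul, Matrix.mul_smul, smul_smul, h22, zero_smul]
    have expand : ∀ a b : Matrix B B (ZMod 4), (1 + a) * (1 + b) = 1 + a + b + a * b := by
      intro a b; noncomm_ring
    rw [expand, h0, add_zero, smul_add]
    abel
  -- product formula for the reduction of a word
  have hprod : ∀ l : List B, φ (cs.wordProd l) = 1 + (2 : ZMod 4) • (l.map F).sum := by
    intro l
    induction l with
    | nil => simp [CoxeterSystem.wordProd_nil]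
    | cons i t ih =>
      rw [cs.wordProd_cons, map_mul, ih, hφs i, hmul, List.map_cons, List.sum_cons]
  -- all values of φ commute
  have hcomm : ∀ x y : W, φ x * φ y = φ y * φ x := by
    intro x y
    obtain ⟨lx, rfl⟩ := cs.wordProd_surjective x
    obtain ⟨ly, rfl⟩ := cs.wordProd_surjective y
    rw [hprod, hprod, hmul, hmul, add_comm ((lx.map F).sum)]
  -- the congruence subgroup, as a subgroup of `W`
  let K : Subgroup W :=
    { carrier := { w | φ w = 1 }
      one_mem' := map_one φ
      mul_mem' := fun {a b} ha hb => by
        have ha' : φ a = 1 := ha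
        have hb' : φ b = 1 := hb
        show φ (a * b) = 1
        rw [map_mul, ha', hb', one_mul]
      inv_mem' := fun {x} hx => by
        have hx' : φ x = 1 := hx
        show φ x⁻¹ = 1
        have h : φ x * φ x⁻¹ = 1 := by
          rw [← map_mul, mul_inv_cancel, map_one]
        rwa [hx', one_mul] at h }
  -- the commutator subgroup is contained in the congruence subgroup
  have hle : commutator W ≤ K := by
    rw [commutator_def]
    refine Subgroup.commutator_le.mpr fun x _ y _ => ?_
    show φ (@Bracket.bracket W W commutatorElement x y) = 1
    have h1 : φ x * φ x⁻¹ = 1 := by rw [← map_mul, mul_inv_cancel, map_one]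
    have h2 : φ y * φ y⁻¹ = 1 := by rw [← map_mul, mul_inv_cancel, map_one]
    rw [commutatorElement_def, map_mul, map_mul, map_mul]
    rw [mul_assoc (φ x), hcomm y x⁻¹, ← mul_assoc, h1, one_mul]
    exact h2
  -- diagonal entries record parities of letter counts
  have hsum : ∀ (l : List B) (k : B), ((l.map F).sum) k k = (l.count k : ZMod 4) := by
    intro l k
    induction l with
    | nil => simp
    | cons i t ih =>
      rw [List.map_cons, List.sum_cons, Matrix.add_apply, ih, List.count_cons]
      by_cases hik : i = k
      · subst hik; simp [F, add_comm]
      · simp [F, hik, Ne.symm hik]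
  -- relate the divisibility condition to `φ`
  have hiff : ∀ w : W, (∀ p q, (4 : ℤ) ∣ (((ρ w : Matrix B B ℤ)) - 1) p q) ↔ φ w = 1 := by
    intro w
    constructor
    · intro h
      ext p q
      have hpq : ((((ρ w : Matrix B B ℤ) - 1) p q : ℤ) : ZMod 4) = 0 := by
        rw [ZMod.intCast_zmod_eq_zero_iff_dvd]
        exact_mod_cast h p q
      have hsub : (((ρ w : Matrix B B ℤ) - 1) p q) = (ρ w : Matrix B B ℤ) p q
          - (1 : Matrix B B ℤ) p q := by simp [Matrix.sub_apply]
      rw [hsub, Int.cast_sub, sub_eq_zero] at hpq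
      have h1 : (((1 : Matrix B B ℤ) p q : ℤ) : ZMod 4) = (1 : Matrix B B (ZMod 4)) p q := by
        by_cases hpq' : p = q <;> simp [Matrix.one_apply, hpq']
      rw [h1] at hpq
      rw [hφapp]
      exact hpq
    · intro h p q
      have key : ((((ρ w : Matrix B B ℤ) - 1) p q : ℤ) : ZMod 4) = 0 → (4 : ℤ) ∣ ((ρ w : Matrix B B ℤ) - 1) p q := by
        intro hz
        have := (ZMod.intCast_zmod_eq_zero_iff_dvd _ 4).mp hz
        exact_mod_cast this
      apply key
      have hsub : (((ρ w : Matrix B B ℤ) - 1) p q) = (ρ w : Matrix B B ℤ) p q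
          - (1 : Matrix B B ℤ) p q := by simp [Matrix.sub_apply]
      rw [hsub, Int.cast_sub, sub_eq_zero]
      have h1 : (((1 : Matrix B B ℤ) p q : ℤ) : ZMod 4) = (1 : Matrix B B (ZMod 4)) p q := by
        by_cases hpq' : p = q <;> simp [Matrix.one_apply, hpq']
      rw [h1, ← h, hφapp]
      rfl
  intro w
  rw [hiff w]
  constructor
  · -- φ w = 1 → w ∈ commutator W
    intro h
    obtain ⟨l, rfl⟩ := cs.wordProd_surjective w
    -- every letter occurs an even number of times
    have heven : ∀ k : B, 2 ∣ l.count k := by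
      intro k
      have hk : φ (cs.wordProd l) k k = (1 : Matrix B B (ZMod 4)) k k := by rw [h]
      rw [hprod, Matrix.add_apply, Matrix.smul_apply, hsum, Matrix.one_apply_eq] at hk
      have h2 : ((2 * l.count k : ℕ) : ZMod 4) = 0 := by
        push_cast
        rw [smul_eq_mul] at hk
        linear_combination hk
      rw [ZMod.natCast_eq_zero_iff] at h2
      omega
    -- the image of `w` in the abelianization is trivial
    have hab : Abelianization.of (cs.wordProd l) = 1 := by
      have hw : Abelianization.of (cs.wordProd l)
          = ∏ i ∈ l.toFinset, (Abelianization.of (cs.simple i)) ^ (l.count i) := by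
        rw [CoxeterSystem.wordProd, map_list_prod, List.map_map,
          Finset.prod_list_map_count]
        simp [Function.comp]
      rw [hw]
      refine Finset.prod_eq_one fun i _ => ?_
      obtain ⟨m, hm⟩ := heven i
      rw [hm, pow_mul, ← map_pow, cs.simple_sq, map_one, one_pow]
    exact (QuotientGroup.eq_one_iff _).mp hab
  · intro h
    exact hle h
end

section
/- Let Γ be a finite simple graph. The right-angled Coxeter group W(Γ) is virtually abelian (has a finite-index abelian subgroup) if and only if Γ is the join of a complete graph and finitely many copies of the graph consisting of two isolated vertices; equivalently, W(Γ) ≅ (ℤ/2)^m × (D_∞)^k for some m, k ≥ 0. -/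
open Monoid

/-- A group is virtually abelian if it has an abelian subgroup of finite index. -/
def VirtuallyAbelian (G : Type*) [Group G] : Prop :=
  ∃ H : Subgroup G, H.FiniteIndex ∧ ∀ a ∈ H, ∀ b ∈ H, a * b = b * a

/-- The infinite dihedral group, as the free product `ℤ/2 * ℤ/2`. -/
abbrev InfDihedral : Type := Coprod (Multiplicative (ZMod 2)) (Multiplicative (ZMod 2))

/-- The Coxeter matrix of a finite simple graph `Γ`: exponent `2` on edges (commuting
generators) and `∞` (encoded `0`) on non-adjacent distinct pairs. -/
def graphCoxeterMatrix {V : Type*} [DecidableEq V] (Γ : SimpleGraph V)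
    [DecidableRel Γ.Adj] : CoxeterMatrix V where
  M := fun v w => if v = w then 1 else if Γ.Adj v w then 2 else 0
  isSymm := by
    ext v w
    by_cases h : w = v <;> simp [Matrix.transpose, h, eq_comm, Γ.adj_comm w v]
  diagonal := by intro i; simp
  off_diagonal := by intro i j h; simp [h]; split <;> simp

/-- The right-angled Coxeter group `W(Γ)` of a finite simple graph `Γ`. -/
abbrev GraphRACG {V : Type*} [DecidableEq V] (Γ : SimpleGraph V) [DecidableRel Γ.Adj] :
    Type _ := (graphCoxeterMatrix Γ).Group



namespace RacgAux

abbrev C2 : Type := Multiplicative (ZMod 2)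

def g2 : C2 := Multiplicative.ofAdd 1

lemma g2_mul_g2 : g2 * g2 = 1 := by decide

lemma g2_ne_one : g2 ≠ 1 := by decide

lemma c2_cases (x : C2) : x = 1 ∨ x = g2 := by revert x; decide

/-- The homomorphism from `ℤ/2` sending the generator to an element of order dividing 2. -/
def c2Hom {G : Type*} [Monoid G] (s : G) (hs : s * s = 1) : C2 →* G where
  toFun x := if x = g2 then s else 1
  map_one' := by
    have hne : (1 : C2) ≠ g2 := by decide
    simp [hne]
  map_mul' x y := by
    have hne : (1 : C2) ≠ g2 := by decide
    rcases c2_cases x with rfl | rfl <;> rcases c2_cases y with rfl | rfl <;>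
      simp [g2_mul_g2, g2_ne_one, hne, hs]

@[simp] lemma c2Hom_g2 {G : Type*} [Monoid G] (s : G) (hs : s * s = 1) :
    c2Hom s hs g2 = s := by simp [c2Hom]

lemma c2Hom_ext {G : Type*} [Monoid G] {f g : C2 →* G} (h : f g2 = g g2) : f = g := by
  refine MonoidHom.ext fun x => ?_
  rcases c2_cases x with rfl | rfl
  · rw [map_one, map_one]
  · exact h

lemma commute_c2Hom {G : Type*} [Monoid G] {s : G} (hs : s * s = 1) {z : G}
    (h : Commute z s) (x : C2) : Commute z (c2Hom s hs x) := by
  rcases c2_cases x with rfl | rfl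
  · rw [map_one]; exact Commute.one_right z
  · rwa [c2Hom_g2]

lemma commute_coprodLift {G : Type*} [Monoid G] (f₁ f₂ : C2 →* G) {z : G}
    (h₁ : ∀ x, Commute z (f₁ x)) (h₂ : ∀ x, Commute z (f₂ x)) (w : InfDihedral) :
    Commute z (Coprod.lift f₁ f₂ w) := by
  induction w using Coprod.induction_on with
  | inl m => rw [Coprod.lift_apply_inl]; exact h₁ m
  | inr n => rw [Coprod.lift_apply_inr]; exact h₂ n
  | mul x y hx hy => rw [map_mul]; exact hx.mul_right hy


/-! ### The infinite dihedral group -/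

def da : InfDihedral := Coprod.inl g2
def db : InfDihedral := Coprod.inr g2

lemma da_mul_da : da * da = 1 := by
  rw [da, ← map_mul, g2_mul_g2, map_one]

lemma db_mul_db : db * db = 1 := by
  rw [db, ← map_mul, g2_mul_g2, map_one]

def dz : InfDihedral := da * db

lemma da_inv : da⁻¹ = da := by
  rw [← mul_eq_one_iff_inv_eq, da_mul_da]

lemma db_inv : db⁻¹ = db := by
  rw [← mul_eq_one_iff_inv_eq, db_mul_db]

lemma da_zpow (i : ℤ) : da * dz ^ i * da = dz ^ (-i) := by
  have h : da * dz * da⁻¹ = dz⁻¹ := by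
    rw [da_inv, dz, mul_inv_rev, da_inv, db_inv]
    calc da * (da * db) * da = (da * da) * (db * da) := by group
    _ = db * da := by rw [da_mul_da, one_mul]
  calc da * dz ^ i * da = (da * dz * da⁻¹) ^ i := by rw [conj_zpow, da_inv]
  _ = dz ^ (-i) := by rw [h, inv_zpow, zpow_neg]

def sr0 : DihedralGroup 0 := DihedralGroup.sr 0
def sr1 : DihedralGroup 0 := DihedralGroup.sr 1

def toDih : InfDihedral →* DihedralGroup 0 :=
  Coprod.lift (c2Hom sr0 (DihedralGroup.sr_mul_self 0)) (c2Hom sr1 (DihedralGroup.sr_mul_self 1))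

@[simp] lemma toDih_da : toDih da = sr0 := by
  rw [toDih, da, Coprod.lift_apply_inl]; exact c2Hom_g2 _ _

@[simp] lemma toDih_db : toDih db = sr1 := by
  rw [toDih, db, Coprod.lift_apply_inr]; exact c2Hom_g2 _ _

def zmod0ToInt : ZMod 0 → ℤ := fun i => i

lemma zmod0_add (i j : ZMod 0) : zmod0ToInt (i + j) = zmod0ToInt i + zmod0ToInt j := rfl

lemma zmod0_sub (i j : ZMod 0) : zmod0ToInt (i - j) = zmod0ToInt i - zmod0ToInt j := rfl

def ofDihFun : DihedralGroup 0 → InfDihedral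
  | .r i => dz ^ (zmod0ToInt i)
  | .sr i => da * dz ^ (zmod0ToInt i)

def ofDih : DihedralGroup 0 →* InfDihedral where
  toFun := ofDihFun
  map_one' := by
    show ofDihFun (.r 0) = 1
    show dz ^ (zmod0ToInt 0) = 1
    rw [show zmod0ToInt 0 = (0:ℤ) from rfl, zpow_zero]
  map_mul' x y := by
    have key : ∀ i : ℤ, da * dz ^ i = dz ^ (-i) * da := by
      intro i
      calc da * dz ^ i = (da * dz ^ i * da) * da := by
            rw [mul_assoc, da_mul_da, mul_one]
      _ = dz ^ (-i) * da := by rw [da_zpow]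
    cases x with
    | r i =>
      cases y with
      | r j =>
        show ofDihFun (.r (i + j)) = ofDihFun (.r i) * ofDihFun (.r j)
        show dz ^ zmod0ToInt (i+j) = dz ^ zmod0ToInt i * dz ^ zmod0ToInt j
        rw [zmod0_add, zpow_add]
      | sr j =>
        show ofDihFun (.sr (j - i)) = ofDihFun (.r i) * ofDihFun (.sr j)
        show da * dz ^ zmod0ToInt (j - i) = dz ^ zmod0ToInt i * (da * dz ^ zmod0ToInt j)
        rw [zmod0_sub, key, key, ← mul_assoc, ← zpow_add, neg_sub, sub_eq_add_neg]
    | sr i =>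
      cases y with
      | r j =>
        show ofDihFun (.sr (i + j)) = ofDihFun (.sr i) * ofDihFun (.r j)
        show da * dz ^ zmod0ToInt (i + j) = da * dz ^ zmod0ToInt i * dz ^ zmod0ToInt j
        rw [zmod0_add, zpow_add, mul_assoc]
      | sr j =>
        show ofDihFun (.r (j - i)) = ofDihFun (.sr i) * ofDihFun (.sr j)
        show dz ^ zmod0ToInt (j - i) = (da * dz ^ zmod0ToInt i) * (da * dz ^ zmod0ToInt j)
        rw [zmod0_sub, key, mul_assoc, ← mul_assoc da da, da_mul_da, one_mul, ← zpow_add,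
          neg_add_eq_sub]

lemma ofDih_toDih : ofDih.comp toDih = MonoidHom.id _ := by
  apply Coprod.hom_ext
  · apply c2Hom_ext
    show ofDih (toDih (Coprod.inl g2)) = Coprod.inl g2
    rw [show (Coprod.inl g2 : InfDihedral) = da from rfl, toDih_da]
    show da * dz ^ zmod0ToInt 0 = da
    rw [show zmod0ToInt 0 = (0:ℤ) from rfl, zpow_zero, mul_one]
  · apply c2Hom_ext
    show ofDih (toDih (Coprod.inr g2)) = Coprod.inr g2
    rw [show (Coprod.inr g2 : InfDihedral) = db from rfl, toDih_db]
    show da * dz ^ zmod0ToInt 1 = db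
    rw [show zmod0ToInt 1 = 1 from rfl, zpow_one, dz, ← mul_assoc, da_mul_da, one_mul]

lemma toDih_injective : Function.Injective toDih := by
  intro x y h
  have := congrArg ofDih h
  calc x = ofDih (toDih x) := (DFunLike.congr_fun ofDih_toDih x).symm
  _ = ofDih (toDih y) := this
  _ = y := DFunLike.congr_fun ofDih_toDih y

/-- The sign homomorphism of the infinite dihedral group. -/
def dsgn : InfDihedral →* C2 := Coprod.lift (MonoidHom.id C2) (MonoidHom.id C2)

def dihSgn : DihedralGroup 0 →* C2 where
  toFun x := match x with
    | .r _ => 1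
    | .sr _ => g2
  map_one' := rfl
  map_mul' x y := by
    cases x <;> cases y <;>
      simp only [DihedralGroup.r_mul_r, DihedralGroup.r_mul_sr, DihedralGroup.sr_mul_r,
        DihedralGroup.sr_mul_sr] <;>
      simp [g2_mul_g2]

lemma dsgn_eq : dsgn = dihSgn.comp toDih := by
  apply Coprod.hom_ext <;> apply c2Hom_ext
  · show dsgn (Coprod.inl g2) = dihSgn (toDih da)
    rw [toDih_da, dsgn, Coprod.lift_apply_inl]
    rfl
  · show dsgn (Coprod.inr g2) = dihSgn (toDih db)
    rw [toDih_db, dsgn, Coprod.lift_apply_inr]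
    rfl

/-- The kernel of the sign homomorphism is abelian. -/
lemma dsgn_ker_comm {u u' : InfDihedral} (hu : dsgn u = 1) (hu' : dsgn u' = 1) :
    u * u' = u' * u := by
  have hr : ∀ w : InfDihedral, dsgn w = 1 → ∃ i, toDih w = DihedralGroup.r i := by
    intro w hw
    rw [dsgn_eq] at hw
    cases h : toDih w with
    | r i => exact ⟨i, rfl⟩
    | sr i =>
      exfalso
      rw [MonoidHom.comp_apply, h] at hw
      exact (by decide : g2 ≠ (1 : C2)) hw
  obtain ⟨i, hi⟩ := hr u hu
  obtain ⟨j, hj⟩ := hr u' hu'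
  apply toDih_injective
  rw [map_mul, map_mul, hi, hj, DihedralGroup.r_mul_r, DihedralGroup.r_mul_r, add_comm]


lemma va_of_mulEquiv {G H : Type*} [Group G] [Group H] (e : G ≃* H)
    (h : VirtuallyAbelian H) : VirtuallyAbelian G := by
  obtain ⟨K, hK, hcomm⟩ := h
  refine ⟨K.comap e.toMonoidHom, ⟨?_⟩, ?_⟩
  · rw [Subgroup.index_comap_of_surjective _ e.surjective]
    exact hK.index_ne_zero
  · intro a ha b hb
    apply e.injective
    rw [map_mul, map_mul]
    exact hcomm _ ha _ hb

lemma va_prod (m k : ℕ) :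
    VirtuallyAbelian ((Fin m → C2) × (Fin k → InfDihedral)) := by
  let ρ : (Fin m → C2) × (Fin k → InfDihedral) →* (Fin k → C2) :=
    (dsgn.compLeft (Fin k)).comp (MonoidHom.snd _ _)
  haveI : Finite ρ.range := inferInstance
  refine ⟨ρ.ker, inferInstance, ?_⟩
  rintro ⟨x, y⟩ ha ⟨x', y'⟩ hb
  rw [MonoidHom.mem_ker] at ha hb
  have hy : ∀ j, dsgn (y j) = 1 := fun j => congrFun ha j
  have hy' : ∀ j, dsgn (y' j) = 1 := fun j => congrFun hb j
  ext j
  · exact mul_comm (x j) (x' j)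
  · exact dsgn_ker_comm (hy j) (hy' j)


section Graph
variable {V : Type*} [DecidableEq V] (Γ : SimpleGraph V) [DecidableRel Γ.Adj]

lemma gcm_diag (v : V) : graphCoxeterMatrix Γ v v = 1 := by
  simp [graphCoxeterMatrix]

lemma gcm_adj {v w : V} (h : Γ.Adj v w) : graphCoxeterMatrix Γ v w = 2 := by
  have : v ≠ w := Γ.ne_of_adj h
  simp [graphCoxeterMatrix, this, h]

lemma gcm_nadj {v w : V} (hne : v ≠ w) (h : ¬ Γ.Adj v w) : graphCoxeterMatrix Γ v w = 0 := by
  simp [graphCoxeterMatrix, hne, h]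

lemma liftable_of {G : Type*} [Monoid G] (f : V → G) (hsq : ∀ v, f v * f v = 1)
    (hcm : ∀ v w, v ≠ w → Γ.Adj v w → Commute (f v) (f w)) :
    CoxeterMatrix.IsLiftable (graphCoxeterMatrix Γ) f := by
  intro i j
  rcases eq_or_ne i j with rfl | hne
  · rw [gcm_diag, pow_one, hsq]
  by_cases hadj : Γ.Adj i j
  · rw [gcm_adj Γ hadj, sq]
    have hc := hcm i j hne hadj
    calc f i * f j * (f i * f j) = f i * (f j * f i) * f j := by group
    _ = f i * (f i * f j) * f j := by rw [← hc]
    _ = (f i * f i) * (f j * f j) := by group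
    _ = 1 := by rw [hsq, hsq, one_mul]
  · rw [gcm_nadj Γ hne hadj, pow_zero]

/-- The Coxeter system of a right-angled Coxeter group. -/
def gcs : CoxeterSystem (graphCoxeterMatrix Γ) (GraphRACG Γ) :=
  (graphCoxeterMatrix Γ).toCoxeterSystem

lemma simple_sq (v : V) : (gcs Γ).simple v * (gcs Γ).simple v = 1 :=
  (gcs Γ).simple_mul_simple_self v

lemma simple_comm {v w : V} (h : Γ.Adj v w) :
    Commute ((gcs Γ).simple v) ((gcs Γ).simple w) := by
  have h2 := (gcs Γ).simple_mul_simple_pow v w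
  rw [gcm_adj Γ h, sq] at h2
  have hv := simple_sq Γ v
  have hw := simple_sq Γ w
  unfold Commute SemiconjBy
  set a := (gcs Γ).simple v
  set b := (gcs Γ).simple w
  calc a * b = a * (a * b * (a * b)) * b := by rw [h2, mul_one]
  _ = (a * a) * (b * a) * (b * b) := by group
  _ = b * a := by rw [hv, hw, one_mul, mul_one]

end Graph

/-! ### Lamplighter-type target group -/

abbrev LampA : Type := ℤ → C2

def permAut (e : Equiv.Perm ℤ) : MulAut LampA where
  toFun f := f ∘ e.symm
  invFun f := f ∘ e
  left_inv f := by ext i; simp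
  right_inv f := by ext i; simp
  map_mul' f g := rfl

def permHom : Equiv.Perm ℤ →* MulAut LampA where
  toFun := permAut
  map_one' := by ext f i; simp [permAut]; rfl
  map_mul' e₁ e₂ := rfl

abbrev LampG : Type := SemidirectProduct LampA (Equiv.Perm ℤ) permHom

lemma permHom_apply (e : Equiv.Perm ℤ) (f : LampA) (i : ℤ) :
    permHom e f i = f (e.symm i) := rfl

def ρ₀ : Equiv.Perm ℤ := Equiv.neg ℤ

def ρ₁ : Equiv.Perm ℤ := Function.Involutive.toPerm (fun i => 1 - i) (fun i => by ring)

def tP : Equiv.Perm ℤ := ρ₀ * ρ₁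

lemma ρ₀_apply (i : ℤ) : ρ₀ i = -i := rfl
lemma ρ₀_symm_apply (i : ℤ) : ρ₀.symm i = -i := rfl
lemma ρ₁_apply (i : ℤ) : ρ₁ i = 1 - i := rfl
lemma ρ₁_symm_apply (i : ℤ) : ρ₁.symm i = 1 - i := rfl

lemma ρ₀_sq : ρ₀ * ρ₀ = 1 := by
  ext i
  simp [Equiv.Perm.mul_apply, ρ₀_apply]

lemma ρ₁_sq : ρ₁ * ρ₁ = 1 := by
  ext i
  simp only [Equiv.Perm.mul_apply, ρ₁_apply, Equiv.Perm.one_apply]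
  ring

lemma tP_apply (i : ℤ) : tP i = i - 1 := by
  show ρ₀ (ρ₁ i) = i - 1
  rw [ρ₁_apply, ρ₀_apply]; ring

lemma tP_pow_apply (n : ℕ) (i : ℤ) : (tP ^ n) i = i - n := by
  induction n with
  | zero => simp
  | succ n ih =>
    rw [pow_succ']
    show tP ((tP ^ n) i) = i - (n + 1 : ℕ)
    rw [ih, tP_apply]
    push_cast
    ring

lemma tP_pow_symm_apply (n : ℕ) (i : ℤ) : (tP ^ n).symm i = i + n := by
  rw [Equiv.symm_apply_eq, tP_pow_apply]
  ring

def lamp : LampA := Pi.mulSingle 0 g2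

lemma lamp_apply (i : ℤ) : lamp i = if i = 0 then g2 else 1 := by
  rcases eq_or_ne i 0 with rfl | h
  · simp [lamp]
  · simp [lamp, h]

def Lfun (n : ℕ) : LampA := fun i => if -(n : ℤ) < i ∧ i ≤ 0 then g2 else 1

lemma Lfun_zero : Lfun 0 = 1 := by
  funext i
  simp only [Lfun, Nat.cast_zero, neg_zero]
  rw [if_neg (by omega)]
  rfl

lemma xP_pow (n : ℕ) :
    ((⟨lamp, tP⟩ : LampG) ^ n) = ⟨Lfun n, tP ^ n⟩ := by
  induction n with
  | zero =>
    rw [pow_zero]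
    rw [show (1 : LampG) = ⟨1, 1⟩ from rfl, Lfun_zero, pow_zero]
  | succ n ih =>
    rw [pow_succ, ih, SemidirectProduct.mul_def]
    congr 1
    · show Lfun n * (permHom (tP ^ n)) lamp = Lfun (n + 1)
      funext i
      show Lfun n i * lamp ((tP ^ n).symm i) = Lfun (n + 1) i
      rw [tP_pow_symm_apply, lamp_apply]
      rcases eq_or_ne i (-(n:ℤ)) with rfl | hne
      · rw [if_pos (by ring), Lfun, Lfun]
        push_cast
        rw [if_neg (by omega), one_mul, if_pos (by omega)]
      · have h0 : i + n ≠ 0 := by omega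
        rw [if_neg h0, mul_one]
        have hiff : (-(n:ℤ) < i ∧ i ≤ 0) ↔ (-((n:ℤ)+1) < i ∧ i ≤ 0) := by omega
        rw [Lfun, Lfun]
        push_cast
        rw [if_congr hiff rfl rfl]
    · show tP ^ n * tP = tP ^ (n + 1)
      rw [pow_succ]

lemma yP_pow (n : ℕ) :
    ((⟨1, tP⟩ : LampG) ^ n) = ⟨1, tP ^ n⟩ := by
  induction n with
  | zero => rw [pow_zero]; rfl
  | succ n ih =>
    rw [pow_succ, ih, SemidirectProduct.mul_def, map_one, mul_one, pow_succ]

lemma lamp_pows_ne (n : ℕ) (hn : n ≠ 0) :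
    ((⟨lamp, tP⟩ : LampG) ^ n) * ((⟨1, tP⟩ : LampG) ^ n) ≠
      ((⟨1, tP⟩ : LampG) ^ n) * ((⟨lamp, tP⟩ : LampG) ^ n) := by
  rw [xP_pow, yP_pow, SemidirectProduct.mul_def, SemidirectProduct.mul_def]
  intro h
  have hleft := congrArg SemidirectProduct.left h
  simp only at hleft
  rw [map_one, mul_one, one_mul] at hleft
  have h0 := congrFun hleft 0
  rw [show (permHom (tP ^ n)) (Lfun n) 0 = Lfun n ((tP ^ n).symm 0) from rfl,
    tP_pow_symm_apply] at h0
  rw [Lfun, Lfun] at h0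
  rw [if_pos (by omega), if_neg (by omega)] at h0
  exact (by decide : g2 ≠ (1 : C2)) h0

lemma lamp_sq : lamp * lamp = 1 := by
  funext i
  show lamp i * lamp i = 1
  rw [lamp_apply]
  split <;> simp [g2_mul_g2]

lemma permHom_ρ₀_lamp : permHom ρ₀ lamp = lamp := by
  funext i
  rw [permHom_apply, ρ₀_symm_apply]
  rcases eq_or_ne i 0 with rfl | h
  · norm_num
  · rw [lamp_apply, lamp_apply, if_neg (by omega), if_neg h]

lemma not_va {V : Type*} [Fintype V] [DecidableEq V] (Γ : SimpleGraph V) [DecidableRel Γ.Adj]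
    {v w w' : V} (hwv : w ≠ v) (hw'v : w' ≠ v) (hnw : ¬ Γ.Adj v w) (hnw' : ¬ Γ.Adj v w')
    (hww' : w ≠ w') : ¬ VirtuallyAbelian (GraphRACG Γ) := by
  rintro ⟨H, hfi, hcomm⟩
  haveI := hfi
  let N := H.normalCore
  haveI hNfi : N.FiniteIndex := Subgroup.finiteIndex_normalCore H
  set n := N.index with hn_def
  have hn : n ≠ 0 := hNfi.index_ne_zero
  have hNcomm : ∀ a b : GraphRACG Γ, a ∈ N → b ∈ N → a * b = b * a := fun a b ha hb =>
    hcomm a (H.normalCore_le ha) b (H.normalCore_le hb)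
  have hpow : ∀ g : GraphRACG Γ, g ^ n ∈ N := fun g => N.pow_index_mem g
  -- the test homomorphism into the lamplighter-type group
  let fV : V → LampG := fun u =>
    if u = v then ⟨1, ρ₁⟩ else if u = w then ⟨lamp, ρ₀⟩ else if u = w' then ⟨1, ρ₀⟩ else 1
  have fVv : fV v = ⟨1, ρ₁⟩ := if_pos rfl
  have fVw : fV w = ⟨lamp, ρ₀⟩ := by
    show (if w = v then _ else _) = _
    rw [if_neg hwv, if_pos rfl]
  have fVw' : fV w' = ⟨1, ρ₀⟩ := by
    show (if w' = v then _ else _) = _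
    rw [if_neg hw'v, if_neg (Ne.symm hww'), if_pos rfl]
  have hvals : ∀ u, fV u = 1 ∨ u = v ∨ u = w ∨ u = w' := by
    intro u
    by_cases h1 : u = v
    · exact Or.inr (Or.inl h1)
    by_cases h2 : u = w
    · exact Or.inr (Or.inr (Or.inl h2))
    by_cases h3 : u = w'
    · exact Or.inr (Or.inr (Or.inr h3))
    · left
      show (if u = v then _ else _) = _
      rw [if_neg h1, if_neg h2, if_neg h3]
  have hsq : ∀ u, fV u * fV u = 1 := by
    intro u
    rcases hvals u with h1 | rfl | rfl | rfl
    · rw [h1, mul_one]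
    · rw [fVv, SemidirectProduct.mul_def, map_one, mul_one, ρ₁_sq]
      rfl
    · rw [fVw, SemidirectProduct.mul_def, permHom_ρ₀_lamp, lamp_sq, ρ₀_sq]
      rfl
    · rw [fVw', SemidirectProduct.mul_def, map_one, mul_one, ρ₀_sq]
      rfl
  have hX : Commute (⟨lamp, ρ₀⟩ : LampG) ⟨1, ρ₀⟩ := by
    unfold Commute SemiconjBy
    rw [SemidirectProduct.mul_def, SemidirectProduct.mul_def, map_one, mul_one, one_mul,
      permHom_ρ₀_lamp]
  have key : ∀ u u', u ≠ u' → Γ.Adj u u' → Commute (fV u) (fV u') := by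
    intro u u' hne hadj
    rcases hvals u with h1 | rfl | rfl | rfl
    · rw [h1]; exact Commute.one_left _
    · rcases hvals u' with h1 | rfl | rfl | rfl
      · rw [h1]; exact Commute.one_right _
      · exact absurd rfl hne
      · exact absurd hadj hnw
      · exact absurd hadj hnw'
    · rcases hvals u' with h1 | rfl | rfl | rfl
      · rw [h1]; exact Commute.one_right _
      · exact absurd hadj.symm hnw
      · exact absurd rfl hne
      · rw [fVw, fVw']; exact hX
    · rcases hvals u' with h1 | rfl | rfl | rfl
      · rw [h1]; exact Commute.one_right _
      · exact absurd hadj.symm hnw'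
      · rw [fVw', fVw]; exact hX.symm
      · exact absurd rfl hne
  let F : GraphRACG Γ →* LampG := (gcs Γ).lift ⟨fV, liftable_of Γ fV hsq key⟩
  have hFs : ∀ u, F ((gcs Γ).simple u) = fV u := fun u =>
    (gcs Γ).lift_apply_simple (liftable_of Γ fV hsq key) u
  set α := (gcs Γ).simple w * (gcs Γ).simple v with hα
  set β := (gcs Γ).simple w' * (gcs Γ).simple v with hβ
  have hc : α ^ n * β ^ n = β ^ n * α ^ n := hNcomm _ _ (hpow α) (hpow β)
  have h1 : F α = ⟨lamp, tP⟩ := by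
    rw [hα, map_mul, hFs, hFs, fVw, fVv, SemidirectProduct.mul_def, map_one, mul_one]
    rfl
  have h2 : F β = ⟨1, tP⟩ := by
    rw [hβ, map_mul, hFs, hFs, fVw', fVv, SemidirectProduct.mul_def, map_one, mul_one]
    rfl
  apply lamp_pows_ne n hn
  calc ((⟨lamp, tP⟩ : LampG)) ^ n * (⟨1, tP⟩ : LampG) ^ n
      = F (α ^ n * β ^ n) := by rw [map_mul, map_pow, map_pow, h1, h2]
  _ = F (β ^ n * α ^ n) := by rw [hc]
  _ = (⟨1, tP⟩ : LampG) ^ n * (⟨lamp, tP⟩ : LampG) ^ n := by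
      rw [map_mul, map_pow, map_pow, h1, h2]


section Construction

variable {V : Type*} [Fintype V] [DecidableEq V] (Γ : SimpleGraph V) [DecidableRel Γ.Adj]

/-- The graph condition: every vertex has at most one non-neighbour. -/
abbrev Cond : Prop := ∀ v w w' : V, w ≠ v → w' ≠ v → ¬ Γ.Adj v w → ¬ Γ.Adj v w' → w = w'

/-- `u` has a non-neighbour. -/
def hp (u : V) : Prop := ∃ x, x ≠ u ∧ ¬ Γ.Adj u x

instance : DecidablePred (hp Γ) := fun _ => Fintype.decidableExistsFintype

/-- The partner (unique non-neighbour) of a vertex. -/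
noncomputable def σp (u : V) : V := if h : hp Γ u then h.choose else u

lemma σp_spec {u : V} (h : hp Γ u) : σp Γ u ≠ u ∧ ¬ Γ.Adj u (σp Γ u) := by
  unfold σp
  rw [dif_pos h]
  exact h.choose_spec

lemma hp_σp {u : V} (h : hp Γ u) : hp Γ (σp Γ u) :=
  ⟨u, fun e => (σp_spec Γ h).1 e.symm, fun ha => (σp_spec Γ h).2 ha.symm⟩

lemma σp_uniq (hC : Cond Γ) {u x : V} (h : hp Γ u) (hx1 : x ≠ u) (hx2 : ¬ Γ.Adj u x) :
    x = σp Γ u :=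
  hC u x (σp Γ u) hx1 (σp_spec Γ h).1 hx2 (σp_spec Γ h).2

lemma σp_σp (hC : Cond Γ) {u : V} (h : hp Γ u) : σp Γ (σp Γ u) = u :=
  (σp_uniq Γ hC (hp_σp Γ h) (fun e => (σp_spec Γ h).1 e.symm)
    (fun ha => (σp_spec Γ h).2 ha.symm)).symm

lemma adj_of_not_hp {u x : V} (h : ¬ hp Γ u) (hx : x ≠ u) : Γ.Adj u x := by
  unfold hp at h
  push_neg at h
  exact h x hx

lemma adj_of_ne_partner (hC : Cond Γ) {u x : V} (h : hp Γ u) (hx : x ≠ u)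
    (hσ : x ≠ σp Γ u) : Γ.Adj u x := by
  by_contra hn
  exact hσ (σp_uniq Γ hC h hx hn)

/-- Vertices adjacent to all others. -/
abbrev IT : Type _ := {u : V // ¬ hp Γ u}

/-- Representatives (smaller elements) of non-adjacent pairs. -/
abbrev RT : Type _ :=
  {u : V // hp Γ u ∧ Fintype.equivFin V u < Fintype.equivFin V (σp Γ u)}

noncomputable def eI : IT Γ ≃ Fin (Fintype.card (IT Γ)) := Fintype.equivFin _
noncomputable def eR : RT Γ ≃ Fin (Fintype.card (RT Γ)) := Fintype.equivFin _

noncomputable def repp (u : V) : V :=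
  if Fintype.equivFin V u < Fintype.equivFin V (σp Γ u) then u else σp Γ u

noncomputable def side (u : V) : InfDihedral :=
  if Fintype.equivFin V u < Fintype.equivFin V (σp Γ u) then da else db

lemma repp_mem (hC : Cond Γ) {u : V} (h : hp Γ u) :
    hp Γ (repp Γ u) ∧
      Fintype.equivFin V (repp Γ u) < Fintype.equivFin V (σp Γ (repp Γ u)) := by
  unfold repp
  split
  · exact ⟨h, by assumption⟩
  · refine ⟨hp_σp Γ h, ?_⟩
    rw [σp_σp Γ hC h]
    rename_i h'
    refine lt_of_le_of_ne (not_lt.mp h') ?_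
    intro e
    exact (σp_spec Γ h).1 ((Fintype.equivFin V).injective e)

/-- The index of the pair of a paired vertex. -/
noncomputable def idx (hC : Cond Γ) {u : V} (h : hp Γ u) : Fin (Fintype.card (RT Γ)) :=
  eR Γ ⟨repp Γ u, repp_mem Γ hC h⟩

abbrev PGroup : Type _ :=
  (Fin (Fintype.card (IT Γ)) → C2) × (Fin (Fintype.card (RT Γ)) → InfDihedral)

/-- The map sending each generator to the corresponding element of the product group. -/
noncomputable def fdef (hC : Cond Γ) : V → PGroup Γ := fun u =>
  if h : hp Γ u then (1, Pi.mulSingle (idx Γ hC h) (side Γ u))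
  else (Pi.mulSingle (eI Γ ⟨u, h⟩) g2, 1)

lemma commute_prod {M N : Type*} [Mul M] [Mul N] {a b : M} {c d : N}
    (h1 : Commute a b) (h2 : Commute c d) : Commute (a, c) (b, d) := by
  unfold Commute SemiconjBy at *
  rw [Prod.mk_mul_mk, Prod.mk_mul_mk, h1, h2]

lemma side_sq (u : V) : side Γ u * side Γ u = 1 := by
  unfold side
  split
  · exact da_mul_da
  · exact db_mul_db

lemma fdef_sq (hC : Cond Γ) (u : V) : fdef Γ hC u * fdef Γ hC u = 1 := by
  unfold fdef
  split
  · rw [Prod.mk_mul_mk, one_mul, ← Pi.mulSingle_mul, side_sq, Pi.mulSingle_one]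
    rfl
  · rw [Prod.mk_mul_mk, one_mul, ← Pi.mulSingle_mul, g2_mul_g2, Pi.mulSingle_one]
    rfl

lemma repp_ne (hC : Cond Γ) {u u' : V} (hu : hp Γ u) (hu' : hp Γ u') (hne : u ≠ u')
    (hadj : Γ.Adj u u') : repp Γ u ≠ repp Γ u' := by
  unfold repp
  split <;> split
  · exact hne
  · intro e
    exact (σp_spec Γ hu').2 (e ▸ hadj.symm)
  · intro e
    exact (σp_spec Γ hu).2 (e ▸ hadj)
  · intro e
    exact hne (by rw [← σp_σp Γ hC hu, e, σp_σp Γ hC hu'])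

lemma idx_ne (hC : Cond Γ) {u u' : V} (hu : hp Γ u) (hu' : hp Γ u') (hne : u ≠ u')
    (hadj : Γ.Adj u u') : idx Γ hC hu ≠ idx Γ hC hu' := by
  intro e
  exact repp_ne Γ hC hu hu' hne hadj
    (congrArg Subtype.val ((eR Γ).injective (e : idx Γ hC hu = idx Γ hC hu')))

lemma fdef_comm (hC : Cond Γ) (u u' : V) (hne : u ≠ u') (hadj : Γ.Adj u u') :
    Commute (fdef Γ hC u) (fdef Γ hC u') := by
  unfold fdef
  split <;> split
  · rename_i h h'
    exact commute_prod (Commute.refl 1)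
      (Pi.mulSingle_commute (idx_ne Γ hC h h' hne hadj) _ _)
  · exact commute_prod (Commute.one_left _) (Commute.one_right _)
  · exact commute_prod (Commute.one_right _) (Commute.one_left _)
  · exact commute_prod (Commute.all _ _) (Commute.refl 1)

/-- The forward homomorphism. -/
noncomputable def Fhom (hC : Cond Γ) : GraphRACG Γ →* PGroup Γ :=
  (gcs Γ).lift ⟨fdef Γ hC, liftable_of Γ (fdef Γ hC) (fdef_sq Γ hC) (fdef_comm Γ hC)⟩

lemma Fhom_simple (hC : Cond Γ) (u : V) : Fhom Γ hC ((gcs Γ).simple u) = fdef Γ hC u :=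
  (gcs Γ).lift_apply_simple _ u

/-- Generator homs from the `ℤ/2` factors. -/
noncomputable def φI (i : Fin (Fintype.card (IT Γ))) : C2 →* GraphRACG Γ :=
  c2Hom ((gcs Γ).simple ((eI Γ).symm i).1) (simple_sq Γ _)

/-- Generator homs from the `D∞` factors. -/
noncomputable def φR (j : Fin (Fintype.card (RT Γ))) : InfDihedral →* GraphRACG Γ :=
  Coprod.lift (c2Hom ((gcs Γ).simple ((eR Γ).symm j).1) (simple_sq Γ _))
    (c2Hom ((gcs Γ).simple (σp Γ ((eR Γ).symm j).1)) (simple_sq Γ _))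

lemma commute_simple_φR (hC : Cond Γ) {j : Fin (Fintype.card (RT Γ))} {u : V}
    (h1 : u ≠ ((eR Γ).symm j).1) (h2 : u ≠ σp Γ ((eR Γ).symm j).1) (y : InfDihedral) :
    Commute ((gcs Γ).simple u) (φR Γ j y) := by
  have hrp : hp Γ ((eR Γ).symm j).1 := ((eR Γ).symm j).2.1
  have hadj1 : Γ.Adj ((eR Γ).symm j).1 u := adj_of_ne_partner Γ hC hrp h1 h2
  have hadj2 : Γ.Adj (σp Γ ((eR Γ).symm j).1) u := by
    refine adj_of_ne_partner Γ hC (hp_σp Γ hrp) h2 ?_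
    rw [σp_σp Γ hC hrp]
    exact h1
  exact commute_coprodLift _ _
    (fun x => commute_c2Hom _ (simple_comm Γ hadj1).symm x)
    (fun x => commute_c2Hom _ (simple_comm Γ hadj2).symm x) y

lemma pairwise_φI :
    Pairwise fun i i' => ∀ x y, Commute (φI Γ i x) (φI Γ i' y) := by
  intro i i' hne x y
  have hune : ((eI Γ).symm i).1 ≠ ((eI Γ).symm i').1 := by
    intro e
    exact hne ((eI Γ).symm.injective (Subtype.ext e))
  have hadj : Γ.Adj ((eI Γ).symm i).1 ((eI Γ).symm i').1 :=
    adj_of_not_hp Γ ((eI Γ).symm i).2 hune.symm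
  exact commute_c2Hom _ ((commute_c2Hom _ (simple_comm Γ hadj).symm x).symm) y

lemma pairwise_φR (hC : Cond Γ) :
    Pairwise fun j j' => ∀ x y, Commute (φR Γ j x) (φR Γ j' y) := by
  intro j j' hne x y
  have h1 : ((eR Γ).symm j').1 ≠ ((eR Γ).symm j).1 := by
    intro e
    exact hne ((eR Γ).symm.injective (Subtype.ext e.symm))
  have h2 : ((eR Γ).symm j').1 ≠ σp Γ ((eR Γ).symm j).1 := by
    intro e
    have hrp : hp Γ ((eR Γ).symm j).1 := ((eR Γ).symm j).2.1
    have hlt := ((eR Γ).symm j').2.2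
    rw [e, σp_σp Γ hC hrp] at hlt
    exact absurd ((eR Γ).symm j).2.2 (not_lt.mpr (le_of_lt hlt))
  have key : ∀ z, Commute ((gcs Γ).simple ((eR Γ).symm j').1) (φR Γ j z) :=
    fun z => commute_simple_φR Γ hC h1 h2 z
  have key2 : ∀ z, Commute ((gcs Γ).simple (σp Γ ((eR Γ).symm j').1)) (φR Γ j z) := by
    intro z
    have hσne1 : σp Γ ((eR Γ).symm j').1 ≠ ((eR Γ).symm j).1 := by
      intro e
      have hσσ := σp_σp Γ hC ((eR Γ).symm j').2.1
      rw [e] at hσσ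
      have hlt := ((eR Γ).symm j).2.2
      rw [hσσ] at hlt
      have hlt' := ((eR Γ).symm j').2.2
      rw [e] at hlt'
      exact absurd hlt' (not_lt.mpr (le_of_lt hlt))
    have hσne2 : σp Γ ((eR Γ).symm j').1 ≠ σp Γ ((eR Γ).symm j).1 := by
      intro e
      have heq : ((eR Γ).symm j').1 = ((eR Γ).symm j).1 := by
        rw [← σp_σp Γ hC ((eR Γ).symm j').2.1, e, σp_σp Γ hC ((eR Γ).symm j).2.1]
      exact h1 heq
    exact commute_simple_φR Γ hC hσne1 hσne2 z
  exact commute_coprodLift _ _ (fun xx => commute_c2Hom _ (key x).symm xx)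
    (fun xx => commute_c2Hom _ (key2 x).symm xx) y

/-- The combined homomorphism from the `(ℤ/2)^m` factor. -/
noncomputable def Φh : (Fin (Fintype.card (IT Γ)) → C2) →* GraphRACG Γ :=
  MonoidHom.noncommPiCoprod (φI Γ) (pairwise_φI Γ)

/-- The combined homomorphism from the `(D∞)^k` factor. -/
noncomputable def Ψh (hC : Cond Γ) : (Fin (Fintype.card (RT Γ)) → InfDihedral) →* GraphRACG Γ :=
  MonoidHom.noncommPiCoprod (φR Γ) (pairwise_φR Γ hC)

lemma cross_comm (hC : Cond Γ) (x : Fin (Fintype.card (IT Γ)) → C2)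
    (y : Fin (Fintype.card (RT Γ)) → InfDihedral) :
    Commute (Φh Γ x) (Ψh Γ hC y) := by
  unfold Φh Ψh
  apply MonoidHom.commute_noncommPiCoprod
  intro j yj
  refine (MonoidHom.commute_noncommPiCoprod _ ?_ x).symm
  intro i xi
  have hne1 : ((eI Γ).symm i).1 ≠ ((eR Γ).symm j).1 := by
    intro e
    exact ((eI Γ).symm i).2 (e ▸ ((eR Γ).symm j).2.1)
  have hne2 : ((eI Γ).symm i).1 ≠ σp Γ ((eR Γ).symm j).1 := by
    intro e
    exact ((eI Γ).symm i).2 (e ▸ hp_σp Γ ((eR Γ).symm j).2.1)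
  have base : Commute ((gcs Γ).simple ((eI Γ).symm i).1) (φR Γ j yj) :=
    commute_simple_φR Γ hC hne1 hne2 yj
  exact commute_c2Hom _ base.symm xi

/-- The backward homomorphism. -/
noncomputable def Bhom (hC : Cond Γ) : PGroup Γ →* GraphRACG Γ :=
  MonoidHom.noncommCoprod (Φh Γ) (Ψh Γ hC) (cross_comm Γ hC)

lemma Bhom_apply (hC : Cond Γ) (p : PGroup Γ) :
    Bhom Γ hC p = Φh Γ p.1 * Ψh Γ hC p.2 := rfl

lemma Φh_single (i : Fin (Fintype.card (IT Γ))) (c : C2) :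
    Φh Γ (Pi.mulSingle i c) = φI Γ i c := by
  unfold Φh
  exact MonoidHom.noncommPiCoprod_mulSingle _ _ _

lemma Ψh_single (hC : Cond Γ) (j : Fin (Fintype.card (RT Γ))) (c : InfDihedral) :
    Ψh Γ hC (Pi.mulSingle j c) = φR Γ j c := by
  unfold Ψh
  exact MonoidHom.noncommPiCoprod_mulSingle _ _ _

lemma fdef_symmI (hC : Cond Γ) (i : Fin (Fintype.card (IT Γ))) :
    fdef Γ hC ((eI Γ).symm i).1 = (Pi.mulSingle i g2, 1) := by
  unfold fdef
  rw [dif_neg ((eI Γ).symm i).2]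
  have h : (⟨((eI Γ).symm i).1, ((eI Γ).symm i).2⟩ : IT Γ) = (eI Γ).symm i :=
    Subtype.ext rfl
  rw [h, Equiv.apply_symm_apply]

lemma fdef_rep1 (hC : Cond Γ) (j : Fin (Fintype.card (RT Γ))) :
    fdef Γ hC ((eR Γ).symm j).1 = (1, Pi.mulSingle j da) := by
  unfold fdef
  rw [dif_pos ((eR Γ).symm j).2.1]
  have hside : side Γ ((eR Γ).symm j).1 = da := by
    unfold side
    rw [if_pos ((eR Γ).symm j).2.2]
  have hidx : idx Γ hC ((eR Γ).symm j).2.1 = j := by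
    unfold idx
    have hval : (⟨repp Γ ((eR Γ).symm j).1, repp_mem Γ hC ((eR Γ).symm j).2.1⟩ : RT Γ)
        = (eR Γ).symm j := by
      apply Subtype.ext
      show repp Γ ((eR Γ).symm j).1 = ((eR Γ).symm j).1
      unfold repp
      rw [if_pos ((eR Γ).symm j).2.2]
    rw [hval, Equiv.apply_symm_apply]
  rw [hside, hidx]

lemma fdef_rep2 (hC : Cond Γ) (j : Fin (Fintype.card (RT Γ))) :
    fdef Γ hC (σp Γ ((eR Γ).symm j).1) = (1, Pi.mulSingle j db) := by
  have hrp : hp Γ ((eR Γ).symm j).1 := ((eR Γ).symm j).2.1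
  have hcond : ¬ (Fintype.equivFin V (σp Γ ((eR Γ).symm j).1) <
      Fintype.equivFin V (σp Γ (σp Γ ((eR Γ).symm j).1))) := by
    rw [σp_σp Γ hC hrp]
    exact not_lt.mpr (le_of_lt ((eR Γ).symm j).2.2)
  unfold fdef
  rw [dif_pos (hp_σp Γ hrp)]
  have hside : side Γ (σp Γ ((eR Γ).symm j).1) = db := by
    unfold side
    rw [if_neg hcond]
  have hidx : idx Γ hC (hp_σp Γ hrp) = j := by
    unfold idx
    have hval : (⟨repp Γ (σp Γ ((eR Γ).symm j).1), repp_mem Γ hC (hp_σp Γ hrp)⟩ : RT Γ)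
        = (eR Γ).symm j := by
      apply Subtype.ext
      show repp Γ (σp Γ ((eR Γ).symm j).1) = ((eR Γ).symm j).1
      unfold repp
      rw [if_neg hcond, σp_σp Γ hC hrp]
    rw [hval, Equiv.apply_symm_apply]
  rw [hside, hidx]

lemma Bhom_Fhom (hC : Cond Γ) :
    (Bhom Γ hC).comp (Fhom Γ hC) = MonoidHom.id (GraphRACG Γ) := by
  apply (gcs Γ).ext_simple
  intro u
  rw [MonoidHom.comp_apply, MonoidHom.id_apply, Fhom_simple]
  by_cases h : hp Γ u
  · rw [show fdef Γ hC u = (1, Pi.mulSingle (idx Γ hC h) (side Γ u)) by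
      unfold fdef; rw [dif_pos h]]
    rw [Bhom_apply, map_one, one_mul, Ψh_single]
    have hrv : ((eR Γ).symm (idx Γ hC h)).1 = repp Γ u := by
      unfold idx
      rw [Equiv.symm_apply_apply]
    unfold side
    split
    · rename_i hlt
      show φR Γ (idx Γ hC h) da = (gcs Γ).simple u
      unfold φR
      rw [show da = Coprod.inl g2 from rfl, Coprod.lift_apply_inl, c2Hom_g2, hrv]
      unfold repp
      rw [if_pos hlt]
    · rename_i hlt
      show φR Γ (idx Γ hC h) db = (gcs Γ).simple u
      unfold φR
      rw [show db = Coprod.inr g2 from rfl, Coprod.lift_apply_inr, c2Hom_g2, hrv]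
      have : repp Γ u = σp Γ u := by
        unfold repp
        rw [if_neg hlt]
      rw [this, σp_σp Γ hC h]
  · rw [show fdef Γ hC u = (Pi.mulSingle (eI Γ ⟨u, h⟩) g2, 1) by
      unfold fdef; rw [dif_neg h]]
    rw [Bhom_apply, map_one, mul_one, Φh_single]
    unfold φI
    rw [c2Hom_g2, Equiv.symm_apply_apply]

lemma Fhom_Φh (hC : Cond Γ) :
    (Fhom Γ hC).comp (Φh Γ) =
      MonoidHom.inl (Fin (Fintype.card (IT Γ)) → C2) (Fin (Fintype.card (RT Γ)) → InfDihedral)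
      := by
  apply MonoidHom.pi_ext
  intro i c
  rcases c2_cases c with rfl | rfl
  · rw [Pi.mulSingle_one, map_one, map_one]
  · rw [MonoidHom.comp_apply, Φh_single]
    unfold φI
    rw [c2Hom_g2, Fhom_simple, fdef_symmI Γ hC, MonoidHom.inl_apply]

lemma Fhom_Ψh (hC : Cond Γ) :
    (Fhom Γ hC).comp (Ψh Γ hC) =
      MonoidHom.inr (Fin (Fintype.card (IT Γ)) → C2) (Fin (Fintype.card (RT Γ)) → InfDihedral)
      := by
  apply MonoidHom.pi_ext
  intro j c
  have key : (Fhom Γ hC).comp (φR Γ j) =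
      (MonoidHom.inr (Fin (Fintype.card (IT Γ)) → C2)
        (Fin (Fintype.card (RT Γ)) → InfDihedral)).comp
        (MonoidHom.mulSingle (fun _ => InfDihedral) j) := by
    apply Coprod.hom_ext
    · apply c2Hom_ext (G := PGroup Γ)
      show (Fhom Γ hC) ((φR Γ j) (Coprod.inl g2)) = _
      unfold φR
      rw [Coprod.lift_apply_inl, c2Hom_g2, Fhom_simple, fdef_rep1 Γ hC]
      rfl
    · apply c2Hom_ext (G := PGroup Γ)
      show (Fhom Γ hC) ((φR Γ j) (Coprod.inr g2)) = _
      unfold φR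
      rw [Coprod.lift_apply_inr, c2Hom_g2, Fhom_simple, fdef_rep2 Γ hC]
      rfl
  rw [MonoidHom.comp_apply, Ψh_single]
  calc (Fhom Γ hC) ((φR Γ j) c)
      = ((Fhom Γ hC).comp (φR Γ j)) c := rfl
  _ = _ := by rw [key]; rfl

lemma Fhom_Bhom (hC : Cond Γ) :
    (Fhom Γ hC).comp (Bhom Γ hC) = MonoidHom.id (PGroup Γ) := by
  apply MonoidHom.ext
  rintro ⟨x, y⟩
  rw [MonoidHom.comp_apply, MonoidHom.id_apply, Bhom_apply, map_mul]
  have hx : Fhom Γ hC (Φh Γ x) = (x, 1) := DFunLike.congr_fun (Fhom_Φh Γ hC) x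
  have hy : Fhom Γ hC (Ψh Γ hC y) = (1, y) := DFunLike.congr_fun (Fhom_Ψh Γ hC) y
  rw [hx, hy, Prod.mk_mul_mk, mul_one, one_mul]

lemma cond_iso (hC : Cond Γ) :
    ∃ m k : ℕ, Nonempty
      (GraphRACG Γ ≃* (Fin m → C2) × (Fin k → InfDihedral)) :=
  ⟨Fintype.card (IT Γ), Fintype.card (RT Γ),
    ⟨MonoidHom.toMulEquiv (Fhom Γ hC) (Bhom Γ hC) (Bhom_Fhom Γ hC) (Fhom_Bhom Γ hC)⟩⟩

end Construction

end RacgAux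

/-- For a finite simple graph `Γ`, the right-angled Coxeter group `W(Γ)` is virtually
abelian if and only if `Γ` is the join of a complete graph and finitely many copies of
the graph on two isolated vertices (equivalently, every vertex of `Γ` has at most one
non-neighbour); equivalently, iff `W(Γ) ≅ (ℤ/2)^m × (D_∞)^k` for some `m, k ≥ 0`. -/
theorem racg_virtually_abelian_iff {V : Type*} [Fintype V] [DecidableEq V]
    (Γ : SimpleGraph V) [DecidableRel Γ.Adj] :
    (VirtuallyAbelian (GraphRACG Γ) ↔
        ∀ v w w' : V, w ≠ v → w' ≠ v → ¬ Γ.Adj v w → ¬ Γ.Adj v w' → w = w')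
    ∧ (VirtuallyAbelian (GraphRACG Γ) ↔
        ∃ m k : ℕ, Nonempty
          (GraphRACG Γ ≃* (Fin m → Multiplicative (ZMod 2)) × (Fin k → InfDihedral))) := by
  have hVC : VirtuallyAbelian (GraphRACG Γ) →
      ∀ v w w' : V, w ≠ v → w' ≠ v → ¬ Γ.Adj v w → ¬ Γ.Adj v w' → w = w' := by
    intro hva v w w' hw hw' hnw hnw'
    by_contra hne
    exact RacgAux.not_va Γ hw hw' hnw hnw' hne hva
  have hCE : (∀ v w w' : V, w ≠ v → w' ≠ v → ¬ Γ.Adj v w → ¬ Γ.Adj v w' → w = w') →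
      ∃ m k : ℕ, Nonempty
        (GraphRACG Γ ≃* (Fin m → Multiplicative (ZMod 2)) × (Fin k → InfDihedral)) :=
    fun hC => RacgAux.cond_iso Γ hC
  have hEV : (∃ m k : ℕ, Nonempty
        (GraphRACG Γ ≃* (Fin m → Multiplicative (ZMod 2)) × (Fin k → InfDihedral))) →
      VirtuallyAbelian (GraphRACG Γ) := by
    rintro ⟨m, k, ⟨e⟩⟩
    exact RacgAux.va_of_mulEquiv e (RacgAux.va_prod m k)
  exact ⟨⟨hVC, fun hC => hEV (hCE hC)⟩, ⟨fun hva => hCE (hVC hva), hEV⟩⟩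
end
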